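/- Let (X, δ) be a finite diversity of negative type with |X| = n. Then there is a map φ : X → ℝ^k with k = 2^n − 1 such that for every nonempty A ⊆ X one has δ(A) = δ_neg(φ(A)), i.e. (X, δ) embeds isometrically into (ℝ^k, δ_neg). -/

import Mathlib

/-!
Möbius inversion of `W ↦ -δ Wᶜ` on the Boolean lattice writes `δ A = ∑_{U ∩ A ≠ ∅} c U`, a
combination of cut diversities. Testing negative type against the vector `x_A = (-1)^|Aᶜ|` for
`Aᶜ ⊆ U` (and `0` otherwise) gives `0 ≤ c U` whenever `∅ ≠ U ≠ X`. Hence for `φ x U = c U [x ∈ U]`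
the coordinatewise maxima over `φ(A)` add up to `δ A`, while the coordinates of each `φ x` add up
to `δ {x} = 0`.
-/

open Finset

attribute [local instance] Classical.propDecidable

/-- The diversity `δ_neg` on `ℝ^k`:
`δ_neg(A) = ∑ᵢ max{aᵢ : a ∈ A} − min{∑ᵢ aᵢ : a ∈ A}` for nonempty finite `A`, and
`δ_neg(∅) = 0`. -/
noncomputable def deltaNeg {k : ℕ} (A : Finset (Fin k → ℝ)) : ℝ :=
  if h : A.Nonempty then
    (∑ i : Fin k, A.sup' h (fun a => a i)) - A.inf' h (fun a => ∑ i : Fin k, a i)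
  else 0

namespace Finset

section Moebius

variable {α R : Type*} [DecidableEq α] [CommRing R]

theorem sum_powerset_sum_powerset_neg_one_pow (W : Finset α) (f : Finset α → R) :
    ∑ U ∈ W.powerset, ∑ S ∈ U.powerset, (-1 : R) ^ (#U + #S) * f S = f W := by
  induction W using Finset.induction_on generalizing f with
  | empty => simp
  | insert a W ha ih =>
    have hinsert : ∀ U ∈ W.powerset,
        ∑ S ∈ (insert a U).powerset, (-1 : R) ^ (#(insert a U) + #S) * f S =
          ∑ S ∈ U.powerset, ((-1 : R) ^ (#U + #S) * f (insert a S) -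
            (-1 : R) ^ (#U + #S) * f S) := by
      intro U hU
      have haU : a ∉ U := fun h => ha (mem_powerset.1 hU h)
      rw [sum_powerset_insert haU, ← sum_add_distrib]
      refine sum_congr rfl fun S hS => ?_
      have haS : a ∉ S := fun h => haU (mem_powerset.1 hS h)
      rw [card_insert_of_notMem haU, card_insert_of_notMem haS]
      ring
    rw [sum_powerset_insert ha, sum_congr rfl hinsert, ← sum_add_distrib]
    simp only [sum_sub_distrib, add_sub_cancel]
    exact ih _

theorem sum_powerset_sum_powerset_neg_one_pow_inter (U : Finset α) (h : Finset α → R) :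
    ∑ S ∈ U.powerset, ∑ T ∈ U.powerset, (-1 : R) ^ (#S + #T) * h (S ∩ T) =
      (-1 : R) ^ #U * ∑ V ∈ U.powerset, (-1 : R) ^ #V * h V := by
  induction U using Finset.induction_on generalizing h with
  | empty => simp
  | insert a U ha ih =>
    have hnot : ∀ S ∈ U.powerset, a ∉ S := fun S hS h => ha (mem_powerset.1 hS h)
    have hfour : ∀ S ∈ U.powerset, ∀ T ∈ U.powerset,
        (-1 : R) ^ (#S + #T) * h (S ∩ T) + (-1 : R) ^ (#S + #(insert a T)) * h (S ∩ insert a T) +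
          ((-1 : R) ^ (#(insert a S) + #T) * h (insert a S ∩ T) +
            (-1 : R) ^ (#(insert a S) + #(insert a T)) * h (insert a S ∩ insert a T)) =
          (-1 : R) ^ (#S + #T) * (h (insert a (S ∩ T)) - h (S ∩ T)) := by
      intro S hS T hT
      rw [card_insert_of_notMem (hnot S hS), card_insert_of_notMem (hnot T hT),
        inter_insert_of_notMem (hnot S hS), insert_inter_of_notMem (hnot T hT),
        ← insert_inter_distrib]
      ring
    simp only [sum_powerset_insert ha, ← sum_add_distrib]
    rw [sum_congr rfl fun S hS => sum_congr rfl (hfour S hS)]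
    refine (ih fun V => h (insert a V) - h V).trans ?_
    rw [card_insert_of_notMem ha, mul_sum, mul_sum]
    refine sum_congr rfl fun V hV => ?_
    rw [card_insert_of_notMem (hnot V hV)]
    ring

end Moebius

variable {α : Type*}

lemma card_nonempty_finset [Fintype α] :
    Fintype.card {U : Finset α // U.Nonempty} = 2 ^ Fintype.card α - 1 := by
  simp only [Fintype.card_subtype, nonempty_iff_ne_empty, filter_ne',
    card_erase_of_mem (mem_univ _), card_univ, Fintype.card_finset]

lemma sum_nonempty_subtype {M : Type*} [Fintype α] [AddCommMonoid M] (g : Finset α → M)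
    (hg : g ∅ = 0) : ∑ U : {U : Finset α // U.Nonempty}, g U = ∑ U, g U := by
  rw [← subtype_univ, sum_subtype_eq_sum_filter]
  exact sum_filter_of_ne fun U _ hU => nonempty_iff_ne_empty.2 fun h => hU (h ▸ hg)

lemma sup'_ite_mem {M : Type*} [DecidableEq α] [LinearOrder M] [Zero M] {A U : Finset α}
    (hA : A.Nonempty) {c : M} (hc : ¬A ⊆ U → 0 ≤ c) :
    A.sup' hA (fun x => if x ∈ U then c else 0) = if Disjoint U A then 0 else c := by
  split_ifs with hUA
  · exact sup'_eq_of_forall hA _ fun x hx => if_neg (disjoint_right.1 hUA hx)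
  · obtain ⟨x, hxU, hxA⟩ := not_disjoint_iff.1 hUA
    refine le_antisymm (sup'_le hA _ fun y hy => ?_) (le_sup'_of_le _ hxA (by simp [hxU]))
    split_ifs with hyU
    · exact le_rfl
    · exact hc fun h => hyU (h hy)

end Finset

lemma deltaNeg_image_eq_sum_sup' {β : Type*} {k : ℕ} {A : Finset β} (hA : A.Nonempty)
    (φ : β → Fin k → ℝ) (hφ : ∀ a ∈ A, ∑ i, φ a i = 0) :
    deltaNeg (A.image φ) = ∑ i, A.sup' hA fun a => φ a i := by
  rw [deltaNeg, dif_pos (hA.image φ), inf'_image, inf'_eq_of_forall _ _ (by simpa using hφ),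
    sub_zero]
  simp only [sup'_image]
  rfl

section CutDecomposition

variable {X : Type*} [Fintype X] [DecidableEq X]

def IsNegativeType (δ : Finset X → ℝ) : Prop :=
  ∀ x : Finset X → ℝ, x ∅ = 0 → ∑ A, x A = 0 → ∑ A, ∑ B, x A * x B * δ (A ∪ B) ≤ 0

variable (δ : Finset X → ℝ)

def cutCoeff (U : Finset X) : ℝ :=
  ∑ S ∈ U.powerset, (-1) ^ (#U + #S + 1) * δ Sᶜ

lemma sum_powerset_cutCoeff (W : Finset X) : ∑ U ∈ W.powerset, cutCoeff δ U = -δ Wᶜ := by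
  rw [← sum_powerset_sum_powerset_neg_one_pow W fun S => -δ Sᶜ]
  refine sum_congr rfl fun U _ => sum_congr rfl fun S _ => ?_
  ring

lemma sum_cutCoeff_not_disjoint (hδ : δ ∅ = 0) (A : Finset X) :
    ∑ U with ¬Disjoint U A, cutCoeff δ U = δ A := by
  have htotal : ∑ U, cutCoeff δ U = 0 := by
    rw [← powerset_univ, sum_powerset_cutCoeff, compl_univ, hδ, neg_zero]
  have hdisjoint : ∑ U with Disjoint U A, cutCoeff δ U = -δ A := by
    rw [← compl_compl A, ← sum_powerset_cutCoeff, compl_compl]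
    congr 1
    ext U
    simp [subset_compl_iff_disjoint_right]
  linarith [sum_filter_add_sum_filter_not univ (fun U => Disjoint U A) (cutCoeff δ)]

lemma cutCoeff_nonneg (hδ : IsNegativeType δ) {U : Finset X} (hU : U.Nonempty)
    (hUX : U ≠ univ) : 0 ≤ cutCoeff δ U := by
  set y : Finset X → ℝ := fun S => if S ∈ U.powerset then (-1) ^ #S else 0
  have hsum_mul : ∀ F : Finset X → ℝ, ∑ S, y S * F S = ∑ S ∈ U.powerset, (-1) ^ #S * F S :=
    fun F => by simp only [y, ite_mul, zero_mul, Fintype.sum_ite_mem]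
  have hy_univ : y univ = 0 := if_neg fun h => hUX (univ_subset_iff.1 (mem_powerset.1 h))
  have hy_sum : ∑ S, y S = 0 := by
    have := hsum_mul 1
    simp only [Pi.one_apply, mul_one] at this
    rw [this]
    exact_mod_cast sum_powerset_neg_one_pow_card_of_nonempty hU
  have hy_form : ∑ S, ∑ T, y S * y T * δ (S ∩ T)ᶜ = -cutCoeff δ U := by
    simp only [mul_assoc, ← mul_sum, hsum_mul]
    simp only [mul_sum, ← mul_assoc, ← pow_add]
    rw [sum_powerset_sum_powerset_neg_one_pow_inter U fun V => δ Vᶜ, cutCoeff, mul_sum,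
      ← sum_neg_distrib]
    refine sum_congr rfl fun V _ => ?_
    ring
  have hcompl : ∀ F : Finset X → ℝ, ∑ A, F Aᶜ = ∑ A, F A :=
    fun F => Equiv.sum_comp (compl_involutive.toPerm _) F
  have hform_compl : ∑ A, ∑ B, y Aᶜ * y Bᶜ * δ (A ∪ B) = ∑ S, ∑ T, y S * y T * δ (S ∩ T)ᶜ := by
    rw [← hcompl]
    refine Fintype.sum_congr _ _ fun S => ?_
    rw [← hcompl]
    simp only [compl_inter, compl_compl]
  have := hδ (fun A => y Aᶜ) (by simpa using hy_univ) (by rw [hcompl y]; exact hy_sum)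
  rw [hform_compl, hy_form] at this
  linarith

def cutEmbedding (x : X) (U : Finset X) : ℝ := if x ∈ U then cutCoeff δ U else 0

lemma sum_sup'_cutEmbedding (hδ : IsNegativeType δ) (hδ0 : δ ∅ = 0) {A : Finset X}
    (hA : A.Nonempty) :
    ∑ U : {U : Finset X // U.Nonempty}, A.sup' hA (fun x => cutEmbedding δ x U) = δ A := by
  have hcoord : ∀ U : {U : Finset X // U.Nonempty},
      A.sup' hA (fun x => cutEmbedding δ x U) = if Disjoint U.1 A then 0 else cutCoeff δ U :=
    fun U => sup'_ite_mem hA fun hAU =>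
      cutCoeff_nonneg δ hδ U.2 fun hU => hAU (hU ▸ subset_univ A)
  rw [Fintype.sum_congr _ _ hcoord,
    sum_nonempty_subtype (fun U => if Disjoint U A then 0 else cutCoeff δ U) (by simp),
    ← sum_cutCoeff_not_disjoint δ hδ0 A, sum_filter]
  simp only [ite_not]

lemma sum_cutEmbedding (hδ0 : δ ∅ = 0) {x : X} (hx : δ {x} = 0) :
    ∑ U : {U : Finset X // U.Nonempty}, cutEmbedding δ x U = 0 := by
  rw [sum_nonempty_subtype _ (if_neg (notMem_empty x)), ← hx, ← sum_cutCoeff_not_disjoint δ hδ0,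
    sum_filter]
  simp only [cutEmbedding, disjoint_singleton_right, not_not]

end CutDecomposition

theorem stmt15_general {X : Type*} [Fintype X] [DecidableEq X] (n : ℕ)
    (hn : Fintype.card X = n) (δ : Finset X → ℝ)
    (h2 : ∀ A : Finset X, δ A = 0 ↔ A.card ≤ 1)
    (hneg : ∀ x : Finset X → ℝ, x ∅ = 0 → (∑ A : Finset X, x A) = 0 →
      ∑ A : Finset X, ∑ B : Finset X, x A * x B * δ (A ∪ B) ≤ 0) :
    ∃ φ : X → (Fin (2 ^ n - 1) → ℝ), ∀ A : Finset X, A.Nonempty →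
      δ A = deltaNeg (A.image φ) := by
  have hδ0 : δ ∅ = 0 := (h2 ∅).2 (by simp)
  have e : Fin (2 ^ n - 1) ≃ {U : Finset X // U.Nonempty} :=
    (Fintype.equivFinOfCardEq (hn ▸ card_nonempty_finset)).symm
  refine ⟨fun x i => cutEmbedding δ x (e i), fun A hA => ?_⟩
  rw [deltaNeg_image_eq_sum_sup' hA _ fun x _ => ?_]
  · exact (e.sum_comp _ |>.trans (sum_sup'_cutEmbedding δ hneg hδ0 hA)).symm
  · exact e.sum_comp _ |>.trans (sum_cutEmbedding δ hδ0 ((h2 {x}).2 (by simp)))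

/-- Every finite negative type diversity on `n` points embeds
isometrically into `(ℝ^k, δ_neg)` with `k = 2^n - 1`. -/
theorem stmt15 {X : Type*} [Fintype X] [DecidableEq X] (n : ℕ)
    (hn : Fintype.card X = n) (δ : Finset X → ℝ)
    (h1 : ∀ A : Finset X, 0 ≤ δ A)
    (h2 : ∀ A : Finset X, δ A = 0 ↔ A.card ≤ 1)
    (h3 : ∀ A B C : Finset X, B.Nonempty → δ (A ∪ C) ≤ δ (A ∪ B) + δ (B ∪ C))
    (hneg : ∀ x : Finset X → ℝ, x ∅ = 0 → (∑ A : Finset X, x A) = 0 →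
      ∑ A : Finset X, ∑ B : Finset X, x A * x B * δ (A ∪ B) ≤ 0) :
    ∃ φ : X → (Fin (2 ^ n - 1) → ℝ), ∀ A : Finset X, A.Nonempty →
      δ A = deltaNeg (A.image φ) :=
  stmt15_general n hn δ h2 hneg
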